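/- arXiv:2201.12618 — 4 statements merged into one kernel-verified Lean document; each statement's English description precedes it below -/
import Mathlib

section
/- Let M be a real symmetric n×n matrix and define the communicability distance ξ_{ij} = exp(M)_{ii} + exp(M)_{jj} − 2·exp(M)_{ij}. Then ξ_{ij} > 0 for all i ≠ j, and ξ_{ii} = 0 for all i. -/
/-!
Writing `B = exp (M / 2)`, symmetry of `M` gives `exp M = Bᵀ B` with `B` invertible, so `exp M`
is positive definite. Evaluating its quadratic form at `eᵢ - eⱼ` gives exactly `ξᵢⱼ`.
-/

open Matrix

namespace Matrix

variable {m : Type*} [Fintype m] [DecidableEq m]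

open scoped ComplexOrder in
theorem IsHermitian.posDef_exp {𝕜 : Type*} [RCLike 𝕜] {A : Matrix m m 𝕜}
    (hA : A.IsHermitian) : (NormedSpace.exp A).PosDef := by
  set B := NormedSpace.exp ((2⁻¹ : ℝ) • A)
  have hB : Bᴴ = B := IsHermitian.exp ((IsSelfAdjoint.all (2⁻¹ : ℝ)).smul hA)
  have hexp : NormedSpace.exp A = Bᴴ * B := by
    rw [hB, ← exp_add_of_commute _ _ (Commute.refl _), ← add_smul]
    norm_num
  rw [hexp]
  exact .conjTranspose_mul_self B (mulVec_injective_iff_isUnit.mpr (isUnit_exp _))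

theorem dotProduct_mulVec_single_sub_single {R : Type*} [CommRing R] {A : Matrix m m R}
    (hA : A.IsSymm) (i j : m) :
    (Pi.single i 1 - Pi.single j 1) ⬝ᵥ (A *ᵥ (Pi.single i 1 - Pi.single j 1)) =
      A i i + A j j - 2 * A i j := by
  have hji : A j i = A i j := hA.apply i j
  simp only [mulVec_sub, mulVec_single, MulOpposite.op_one, one_smul, dotProduct_sub,
    sub_dotProduct, single_dotProduct, col_apply, one_mul, hji]
  ring

theorem PosDef.diag_add_diag_sub_two_mul_pos {R : Type*} [CommRing R] [PartialOrder R]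
    [StarRing R] [TrivialStar R] [Nontrivial R] {A : Matrix m m R} (hA : A.PosDef) {i j : m}
    (hij : i ≠ j) : 0 < A i i + A j j - 2 * A i j := by
  have hne : (Pi.single i 1 - Pi.single j 1 : m → R) ≠ 0 := fun h ↦ by
    simpa [hij] using congr_fun h i
  have hpos := (posDef_iff_dotProduct_mulVec.mp hA).2 hne
  rwa [star_trivial, dotProduct_mulVec_single_sub_single
    (isHermitian_iff_isSymm.mp hA.isHermitian)] at hpos

end Matrix

/-- For a real symmetric matrix `M`, the communicability distance
`ξ i j = exp(M)_{ii} + exp(M)_{jj} - 2 exp(M)_{ij}` is strictly positive off the diagonal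
and vanishes on the diagonal. -/
theorem communicability_distance_pos_off_diag {n : ℕ}
    (M : Matrix (Fin n) (Fin n) ℝ) (hM : Mᵀ = M) :
    (∀ i j, i ≠ j →
      0 < NormedSpace.exp M i i + NormedSpace.exp M j j - 2 * NormedSpace.exp M i j) ∧
    (∀ i,
      NormedSpace.exp M i i + NormedSpace.exp M i i - 2 * NormedSpace.exp M i i = 0) :=
  have hexp : (NormedSpace.exp M).PosDef := (isHermitian_iff_isSymm.mpr hM).posDef_exp
  ⟨fun _ _ hij ↦ hexp.diag_add_diag_sub_two_mul_pos hij, fun _ ↦ by ring⟩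
end

section
/- Let M be a real symmetric n×n matrix and define ξ_{ij} = exp(M)_{ii} + exp(M)_{jj} − 2·exp(M)_{ij}. Then there exist vectors x₁, …, xₙ in Euclidean space ℝⁿ such that ξ_{ij} = ‖x_i − x_j‖² for all i, j. -/
open Matrix

/-! Since `M` is symmetric, `exp M = B * Bᵀ` with `B = exp (M / 2)`, so `exp M` is the Gram matrix
of the rows of `B` and `ξ i j` is the squared distance between rows `i` and `j`. -/

theorem Matrix.mul_transpose_apply_eq_inner {m n : Type*} [Fintype n] (A : Matrix m n ℝ) (i j : m) :
    (A * Aᵀ) i j = inner ℝ (WithLp.toLp 2 (A i)) (WithLp.toLp 2 (A j)) := by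
  simp [Matrix.mul_apply, PiLp.inner_apply, mul_comm]

theorem Matrix.norm_sub_rows_sq {m n : Type*} [Fintype n] (A : Matrix m n ℝ) (i j : m) :
    ‖WithLp.toLp 2 (A i) - WithLp.toLp 2 (A j)‖ ^ 2
      = (A * Aᵀ) i i + (A * Aᵀ) j j - 2 * (A * Aᵀ) i j := by
  simp only [mul_transpose_apply_eq_inner, norm_sub_sq_real, real_inner_self_eq_norm_sq]
  ring

theorem Matrix.exp_eq_exp_half_mul_transpose {m : Type*} [Fintype m] [DecidableEq m]
    (M : Matrix m m ℝ) (hM : Mᵀ = M) :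
    NormedSpace.exp M = NormedSpace.exp ((1 / 2 : ℝ) • M) * (NormedSpace.exp ((1 / 2 : ℝ) • M))ᵀ := by
  rw [← exp_transpose, transpose_smul, hM, ← exp_add_of_commute _ _ (Commute.refl _), ← add_smul]
  norm_num

/-- For a real symmetric matrix `M`, the communicability distance
`ξ i j = exp(M)_{ii} + exp(M)_{jj} - 2 exp(M)_{ij}` is realized as the squared Euclidean
distance between suitable vectors `x₁, …, xₙ` in `ℝⁿ`. -/
theorem communicability_distance_eq_sq_dist {n : ℕ}
    (M : Matrix (Fin n) (Fin n) ℝ) (hM : Mᵀ = M) :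
    ∃ x : Fin n → EuclideanSpace ℝ (Fin n), ∀ i j,
      NormedSpace.exp M i i + NormedSpace.exp M j j - 2 * NormedSpace.exp M i j
        = ‖x i - x j‖ ^ 2 := by
  refine ⟨fun i => WithLp.toLp 2 (NormedSpace.exp ((1 / 2 : ℝ) • M) i), fun i j => ?_⟩
  rw [norm_sub_rows_sq, ← exp_eq_exp_half_mul_transpose M hM]
end

section
/- Let M be a real symmetric n×n matrix and define ξ_{ij} = exp(M)_{ii} + exp(M)_{jj} − 2·exp(M)_{ij}. Then the function d(i,j) = √(ξ_{ij}) satisfies the triangle inequality: d(i,k) ≤ d(i,j) + d(j,k) for all indices i, j, k. Together with symmetry and positivity off the diagonal, d is a metric on the index set {1,…,n}. -/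
open Matrix

/-! Since `M` is symmetric, `A = exp (M / 2)` is symmetric and `exp M = A * Aᵀ` is the Gram matrix
of the rows of `A`. Hence `ξ_{ij} = ‖A i - A j‖²`, so `d` is the Euclidean distance between rows
of `A`, and these rows are distinct because `A` is invertible. -/

noncomputable def commDist {n : ℕ} (M : Matrix (Fin n) (Fin n) ℝ) (i j : Fin n) : ℝ :=
  Real.sqrt (NormedSpace.exp M i i + NormedSpace.exp M j j - 2 * NormedSpace.exp M i j)

namespace Matrix

theorem sqrt_gram_eq_dist {ι E : Type*} [NormedAddCommGroup E] [InnerProductSpace ℝ E]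
    (v : ι → E) (i j : ι) :
    √(gram ℝ v i i + gram ℝ v j j - 2 * gram ℝ v i j) = dist (v i) (v j) := by
  rw [gram_apply, gram_apply, gram_apply, real_inner_self_eq_norm_sq, real_inner_self_eq_norm_sq,
    add_sub_right_comm, ← norm_sub_sq_real, dist_eq_norm, Real.sqrt_sq (norm_nonneg _)]

theorem mul_transpose_eq_gram {m n : Type*} [Fintype n] (A : Matrix m n ℝ) :
    A * Aᵀ = gram ℝ (fun i ↦ WithLp.toLp 2 (A i)) := by
  ext i j
  simp [mul_apply, gram_apply, PiLp.inner_apply, mul_comm]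

theorem exp_eq_exp_half_mul_transpose_s3 {m 𝕂 : Type*} [Fintype m] [DecidableEq m] [RCLike 𝕂]
    {M : Matrix m m 𝕂} (hM : Mᵀ = M) :
    NormedSpace.exp M =
      NormedSpace.exp ((1 / 2 : 𝕂) • M) * (NormedSpace.exp ((1 / 2 : 𝕂) • M))ᵀ := by
  rw [← exp_transpose, transpose_smul, hM, ← exp_add_of_commute _ _ (Commute.refl _), ← add_smul]
  norm_num

theorem row_injective_of_isUnit {m R : Type*} [Fintype m] [DecidableEq m] [CommRing R]
    [Nontrivial R] {A : Matrix m m R} (hA : IsUnit A) : Function.Injective A.row :=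
  (linearIndependent_rows_of_isUnit hA).injective

end Matrix

theorem commDist_eq_dist {n : ℕ} {M : Matrix (Fin n) (Fin n) ℝ} (hM : Mᵀ = M) (i j : Fin n) :
    commDist M i j = dist (WithLp.toLp 2 (NormedSpace.exp ((1 / 2 : ℝ) • M) i))
      (WithLp.toLp 2 (NormedSpace.exp ((1 / 2 : ℝ) • M) j)) := by
  rw [commDist, exp_eq_exp_half_mul_transpose_s3 hM, mul_transpose_eq_gram, sqrt_gram_eq_dist]

/-- For a real symmetric matrix `M`, the function `d(i,j) = √(ξ_{ij})` satisfies the triangle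
inequality; together with symmetry, positivity off the diagonal and vanishing on the diagonal,
`d` is a metric on the index set. -/
theorem commDist_is_metric {n : ℕ} (M : Matrix (Fin n) (Fin n) ℝ) (hM : Mᵀ = M) :
    (∀ i j k, commDist M i k ≤ commDist M i j + commDist M j k) ∧
    (∀ i j, commDist M i j = commDist M j i) ∧
    (∀ i j, i ≠ j → 0 < commDist M i j) ∧
    (∀ i, commDist M i i = 0) := by
  have rows_injective :
      Function.Injective fun i ↦ WithLp.toLp 2 (NormedSpace.exp ((1 / 2 : ℝ) • M) i) :=
    (WithLp.toLp_injective 2).comp (row_injective_of_isUnit (isUnit_exp _))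
  simp only [commDist_eq_dist hM]
  exact ⟨fun _ _ _ ↦ dist_triangle _ _ _, fun _ _ ↦ dist_comm _ _,
    fun _ _ hij ↦ dist_pos.2 (rows_injective.ne hij), fun _ ↦ dist_self _⟩
end

section
/- Entrywise monotonicity of the communicability matrix in the inter-layer intensity: if all entries of A and of C are nonnegative, then for all indices i, j and all real numbers 0 ≤ ω ≤ ω′, one has exp(A + ω·C)_{ij} ≤ exp(A + ω′·C)_{ij}; in particular, for ω ∈ [0,1], exp(A + ω·C)_{ij} ≤ exp(A + C)_{ij}. -/
/-!
The exponential series `∑ Mⁿ / n!` has nonnegative coefficients, and on matrices with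
nonnegative entries each power `Mⁿ` is entrywise monotone in `M`; hence so is every entry of
`exp M`. Increasing `ω` increases `A + ω • C` entrywise when `C ≥ 0`.
-/

open scoped Nat

namespace Matrix

variable {n : Type*} [Fintype n] [DecidableEq n]

theorem pow_apply_le_pow_apply {α : Type*} [Semiring α] [PartialOrder α] [IsOrderedRing α]
    {M M' : Matrix n n α} (hM : ∀ i j, 0 ≤ M i j) (h : ∀ i j, M i j ≤ M' i j) (k : ℕ) :
    ∀ i j, (M ^ k) i j ≤ (M' ^ k) i j := by
  have hM' : ∀ i j, 0 ≤ M' i j := fun i j => (hM i j).trans (h i j)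
  induction k with
  | zero => exact fun i j => le_rfl
  | succ k ih =>
    intro i j
    rw [pow_succ, pow_succ, mul_apply, mul_apply]
    exact Finset.sum_le_sum fun l _ =>
      mul_le_mul (ih i l) (h l j) (hM l j) (pow_apply_nonneg hM' k i l)

theorem hasSum_exp_apply (M : Matrix n n ℝ) (i j : n) :
    HasSum (fun k => (k !⁻¹ : ℝ) * (M ^ k) i j) (NormedSpace.exp M i j) := by
  -- Any algebra norm inducing the product topology will do; `exp` itself depends only on that.
  let _ : NormedRing (Matrix n n ℝ) := Matrix.linftyOpNormedRing
  let _ : NormedAlgebra ℝ (Matrix n n ℝ) := Matrix.linftyOpNormedAlgebra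
  exact Pi.hasSum.mp (Pi.hasSum.mp (NormedSpace.exp_series_hasSum_exp' (𝕂 := ℝ) M) i) j

theorem exp_apply_le_exp_apply {M M' : Matrix n n ℝ} (hM : ∀ i j, 0 ≤ M i j)
    (h : ∀ i j, M i j ≤ M' i j) (i j : n) :
    NormedSpace.exp M i j ≤ NormedSpace.exp M' i j :=
  hasSum_le (fun k => mul_le_mul_of_nonneg_left (pow_apply_le_pow_apply hM h k i j)
    (by positivity)) (hasSum_exp_apply M i j) (hasSum_exp_apply M' i j)

end Matrix

theorem exp_entry_monotone_general {N : ℕ} (A C : Matrix (Fin N) (Fin N) ℝ)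
    (hA : ∀ i j, 0 ≤ A i j) (hC : ∀ i j, 0 ≤ C i j) :
    (∀ ω ω' : ℝ, 0 ≤ ω → ω ≤ ω' → ∀ i j,
        NormedSpace.exp (A + ω • C) i j ≤ NormedSpace.exp (A + ω' • C) i j) ∧
    (∀ ω ∈ Set.Icc (0 : ℝ) 1, ∀ i j,
        NormedSpace.exp (A + ω • C) i j ≤ NormedSpace.exp (A + C) i j) := by
  have mono : ∀ ω ω' : ℝ, 0 ≤ ω → ω ≤ ω' → ∀ i j,
      NormedSpace.exp (A + ω • C) i j ≤ NormedSpace.exp (A + ω' • C) i j :=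
    fun ω ω' hω hωω' => Matrix.exp_apply_le_exp_apply
      (fun i j => add_nonneg (hA i j) (mul_nonneg hω (hC i j)))
      (fun i j => add_le_add_right (mul_le_mul_of_nonneg_right hωω' (hC i j)) _)
  refine ⟨mono, fun ω hω => ?_⟩
  simpa only [one_smul] using mono ω 1 hω.1 hω.2

/-- Entrywise monotonicity of the communicability matrix in the inter-layer intensity: if `A` and
`C` have nonnegative entries, then `exp(A + ω·C)_{ij}` is monotone in `ω ≥ 0`; in particular,
for `ω ∈ [0,1]`, `exp(A + ω·C)_{ij} ≤ exp(A + C)_{ij}`. -/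
theorem exp_entry_monotone {N : ℕ} (hN : 1 ≤ N) (A C : Matrix (Fin N) (Fin N) ℝ)
    (hA : ∀ i j, 0 ≤ A i j) (hC : ∀ i j, 0 ≤ C i j) :
    (∀ ω ω' : ℝ, 0 ≤ ω → ω ≤ ω' → ∀ i j,
        NormedSpace.exp (A + ω • C) i j ≤ NormedSpace.exp (A + ω' • C) i j) ∧
    (∀ ω ∈ Set.Icc (0 : ℝ) 1, ∀ i j,
        NormedSpace.exp (A + ω • C) i j ≤ NormedSpace.exp (A + C) i j) :=
  exp_entry_monotone_general A C hA hC
end
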